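/- Let q > 1 be a prime power, n > t ≥ s ≥ 2, and let P be a vector space partition of F_q^n of hole-type (t, s, m_1) with exactly l·q^s + x members of dimension ≥ s, where x ≥ 1, and with m_1 = b·q^s + c ≥ 1 holes for integers b, c, l ≥ 0 with (c + x − 1)/q an integer. Then there exists a hyperplane Ĥ of F_q^n such that the number of holes of P in Ĥ equals b̂·q^{s−1} + (c+x−1)/q for some integer b̂ < b. -/

import Mathlib

open Module Set

/-!
Counting the nonzero vectors of a subspace `W` member by member gives
`∑_{U ∈ P} (q ^ dim (U ⊓ W) - 1) = q ^ dim W - 1`. A hole contributes `q - 1` or `0`, while a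
member of dimension `≥ s` meets `V` in dimension `≥ s` and a hyperplane in dimension `≥ s - 1`.
Hence `(q - 1) m₁ ≡ N - 1 (mod q^s)` and `(q - 1) m̂₁(H) ≡ N - 1 (mod q^(s-1))`, `N` being the
number of non-holes; as `q - 1` is a unit modulo `q^s`, `q m̂₁(H) ≡ m₁ + x - 1 (mod q^s)`.
Double counting incident (hole, hyperplane) pairs gives a hyperplane with `q m̂₁(H) < m₁`,
which makes the multiple of `q^s` negative, i.e. `b̂ < b`.
-/

theorem Set.Finite.ncard_sep_eq_card_filter {α : Type*} {s : Set α} (hs : s.Finite)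
    (p : α → Prop) [DecidablePred p] : {x ∈ s | p x}.ncard = (hs.toFinset.filter p).card := by
  rw [← Set.ncard_coe_finset, Finset.coe_filter]
  simp

theorem pow_dvd_mul_sub_sub_of_dvd_sub_one_mul {q a b e : ℤ} {s : ℕ} (hs : 1 ≤ s)
    (ha : q ^ s ∣ (q - 1) * a - e) (hb : q ^ (s - 1) ∣ (q - 1) * b - e) :
    q ^ s ∣ q * b - a - e := by
  have hqs : q ^ s = q * q ^ (s - 1) := by rw [← pow_succ', Nat.sub_add_cancel hs]
  have hcop : IsCoprime (q ^ s) (q - 1) := IsCoprime.pow_left ⟨1, -1, by ring⟩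
  refine hcop.dvd_of_dvd_mul_left ?_
  have := dvd_sub (hqs ▸ mul_dvd_mul_left q hb) ha
  convert this using 1
  ring

theorem exists_lt_eq_mul_pow_pred_add_div {q b c l x m₁ m : ℤ} {s : ℕ} (hs : 1 ≤ s) (hq : 0 < q)
    (hx : 1 ≤ x) (hdiv : q ∣ c + x - 1) (hm₁ : m₁ = b * q ^ s + c) (hlt : q * m < m₁)
    (hcong : q ^ s ∣ q * m - m₁ - (l * q ^ s + x - 1)) :
    ∃ b' < b, m = b' * q ^ (s - 1) + (c + x - 1) / q := by
  obtain ⟨k, hk⟩ := hcong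
  have hqs : q ^ s = q * q ^ (s - 1) := by rw [← pow_succ', Nat.sub_add_cancel hs]
  have hneg : q ^ s * (k + l) < 0 := by linarith
  refine ⟨b + (k + l), by linarith [neg_of_mul_neg_right hneg (by positivity)], ?_⟩
  obtain ⟨d, hd⟩ := hdiv
  rw [hd, Int.mul_ediv_cancel_left _ hq.ne']
  apply mul_left_cancel₀ hq.ne'
  linear_combination hk + hm₁ + hd + (b + k + l) * hqs

section Hyperplane

variable {F V : Type*} [Field F] [AddCommGroup V] [Module F V] [FiniteDimensional F V]

theorem Submodule.finrank_le_finrank_inf_add_one {H : Submodule F V}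
    (hH : finrank F H + 1 = finrank F V) (U : Submodule F V) :
    finrank F U ≤ finrank F ↥(U ⊓ H) + 1 := by
  have := Submodule.finrank_sup_add_finrank_inf_eq U H
  have := Submodule.finrank_le (U ⊔ H)
  omega

theorem Submodule.finrank_inf_eq_zero_of_not_le {U W : Submodule F V} (hU : finrank F U = 1)
    (hUW : ¬U ≤ W) : finrank F ↥(U ⊓ W) = 0 := by
  have := Submodule.finrank_lt_finrank_of_lt (inf_lt_left.mpr hUW)
  omega

end Hyperplane

section FiniteField

variable {F V : Type*} [Field F] [Fintype F] [AddCommGroup V] [Module F V] [Finite V]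

theorem Submodule.ncard_sdiff_zero_add_one (W : Submodule F V) :
    ((W : Set V) \ {0}).ncard + 1 = Fintype.card F ^ finrank F W := by
  rw [Set.ncard_sdiff_singleton_add_one W.zero_mem (toFinite _), ← Nat.card_coe_set_eq,
    SetLike.coe_sort_coe, natCard_eq_pow_finrank (K := F), Nat.card_eq_fintype_card]

def IsVectorSpacePartition (P : Set (Submodule F V)) : Prop :=
  ∀ v : V, v ≠ 0 → ∃! U, U ∈ P ∧ v ∈ U

namespace IsVectorSpacePartition

variable {P : Set (Submodule F V)}

theorem sum_pow_finrank_inf_sub_one (hP : IsVectorSpacePartition P) (W : Submodule F V) :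
    ∑ U ∈ P.toFinite.toFinset, ((Fintype.card F : ℤ) ^ finrank F ↥(U ⊓ W) - 1)
      = (Fintype.card F : ℤ) ^ finrank F W - 1 := by
  have hcover : (W : Set V) \ {0} = ⋃ U ∈ P, ((U ⊓ W : Submodule F V) : Set V) \ {0} := by
    ext v
    simp only [mem_sdiff, mem_singleton_iff, mem_iUnion, Submodule.coe_inf, mem_inter_iff,
      SetLike.mem_coe, exists_prop]
    constructor
    · rintro ⟨hvW, hv0⟩
      obtain ⟨U, ⟨hUP, hvU⟩, -⟩ := hP v hv0
      exact ⟨U, hUP, ⟨hvU, hvW⟩, hv0⟩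
    · rintro ⟨U, -, ⟨-, hvW⟩, hv0⟩
      exact ⟨hvW, hv0⟩
  have hdisj : P.PairwiseDisjoint fun U => ((U ⊓ W : Submodule F V) : Set V) \ {0} := by
    intro U hU U' hU' hne
    refine Set.disjoint_left.mpr fun v hv hv' => hne ?_
    obtain ⟨U₀, -, huniq⟩ := hP v hv.2
    exact (huniq U ⟨hU, hv.1.1⟩).trans (huniq U' ⟨hU', hv'.1.1⟩).symm
  have hcast (W' : Submodule F V) :
      ((((W' : Set V) \ {0}).ncard : ℕ) : ℤ) = (Fintype.card F : ℤ) ^ finrank F W' - 1 :=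
    eq_sub_of_add_eq (by exact_mod_cast W'.ncard_sdiff_zero_add_one)
  have hcard := congrArg (Nat.cast : ℕ → ℤ)
    (P.toFinite.ncard_biUnion (fun _ _ => toFinite _) hdisj)
  rw [← hcover, Nat.cast_finsum_mem P.toFinite, hcast,
    finsum_mem_eq_finite_toFinset_sum _ P.toFinite] at hcard
  rw [hcard]
  exact Finset.sum_congr rfl fun U _ => (hcast _).symm

theorem pow_dvd_sub_one_mul_ncard_holes_sub (hP : IsVectorSpacePartition P)
    {W : Submodule F V} {r : ℕ} (hrW : r ≤ finrank F W)
    (hr : ∀ U ∈ P, finrank F U ≠ 1 → r ≤ finrank F ↥(U ⊓ W)) :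
    (Fintype.card F : ℤ) ^ r ∣ (Fintype.card F - 1) * {U ∈ P | finrank F U = 1 ∧ U ≤ W}.ncard
      - ({U ∈ P | finrank F U ≠ 1}.ncard - 1) := by
  classical
  have hsum := hP.sum_pow_finrank_inf_sub_one W
  set q : ℤ := (Fintype.card F : ℤ)
  set T := P.toFinite.toFinset
  rw [← Finset.sum_filter_add_sum_filter_not T (fun U => finrank F U = 1)] at hsum
  have hholes : ∑ U ∈ T.filter (fun U : Submodule F V => finrank F U = 1),
      (q ^ finrank F ↥(U ⊓ W) - 1) = (q - 1) * {U ∈ P | finrank F U = 1 ∧ U ≤ W}.ncard := by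
    rw [P.toFinite.ncard_sep_eq_card_filter, ← Finset.filter_filter, Finset.card_filter,
      Nat.cast_sum, Finset.mul_sum]
    refine Finset.sum_congr rfl fun U hU => ?_
    have hU1 := (Finset.mem_filter.mp hU).2
    by_cases hUW : U ≤ W
    · rw [inf_eq_left.mpr hUW, hU1]
      simp [hUW]
    · simp [hUW, Submodule.finrank_inf_eq_zero_of_not_le hU1 hUW]
  have hbig : ∑ U ∈ T.filter (fun U : Submodule F V => ¬finrank F U = 1),
      (q ^ finrank F ↥(U ⊓ W) - 1)
        = ∑ U ∈ T.filter (fun U : Submodule F V => ¬finrank F U = 1), q ^ finrank F ↥(U ⊓ W)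
          - {U ∈ P | ¬finrank F U = 1}.ncard := by
    rw [Finset.sum_sub_distrib, Finset.sum_const, P.toFinite.ncard_sep_eq_card_filter,
      nsmul_one]
  obtain ⟨a, ha⟩ : q ^ r ∣ ∑ U ∈ T.filter (fun U : Submodule F V => ¬finrank F U = 1),
      q ^ finrank F ↥(U ⊓ W) := Finset.dvd_sum fun U hU => by
    rw [Finset.mem_filter, Set.Finite.mem_toFinset] at hU
    exact pow_dvd_pow q (hr U hU.1 hU.2)
  obtain ⟨w, hw⟩ : q ^ r ∣ q ^ finrank F W := pow_dvd_pow q hrW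
  exact ⟨w - a, by linear_combination hsum - hholes - hbig + hw - ha⟩

end IsVectorSpacePartition

theorem ncard_setOf_le_ker (U : Submodule F V) (hU : finrank F U = 1) :
    {φ : Dual F V | U ≤ LinearMap.ker φ}.ncard = Fintype.card F ^ (finrank F V - 1) := by
  have hset : {φ : Dual F V | U ≤ LinearMap.ker φ} = U.dualAnnihilator := by
    ext φ
    simp [Submodule.mem_dualAnnihilator, SetLike.le_def]
  have := Subspace.finrank_add_finrank_dualAnnihilator_eq U
  rw [hset, ← Nat.card_coe_set_eq, SetLike.coe_sort_coe, natCard_eq_pow_finrank (K := F),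
    Nat.card_eq_fintype_card]
  congr 1
  omega

theorem exists_hyperplane_mul_ncard_lt (S : Set (Submodule F V))
    (hS : ∀ U ∈ S, finrank F U = 1) (hne : S.Nonempty) :
    ∃ H : Submodule F V, finrank F H + 1 = finrank F V ∧
      Fintype.card F * {U ∈ S | U ≤ H}.ncard < S.ncard := by
  classical
  have := Module.finite_of_finite F (M := Dual F V)
  let := Fintype.ofFinite (Dual F V)
  obtain ⟨T, rfl⟩ := S.toFinite.exists_finset_coe
  set q := Fintype.card F
  have hV : 1 ≤ finrank F V := by
    obtain ⟨U, hU⟩ := hne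
    exact hS U hU ▸ Submodule.finrank_le U
  have hdouble : ∑ φ : Dual F V, (T.filter fun U => U ≤ LinearMap.ker φ).card
      = T.card * q ^ (finrank F V - 1) := by
    calc ∑ φ : Dual F V, (T.filter fun U => U ≤ LinearMap.ker φ).card
        = ∑ U ∈ T, (Finset.univ.filter fun φ : Dual F V => U ≤ LinearMap.ker φ).card :=
          Finset.sum_card_bipartiteAbove_eq_sum_card_bipartiteBelow _
      _ = ∑ U ∈ T, q ^ (finrank F V - 1) := Finset.sum_congr rfl fun U hU => by
          rw [← ncard_setOf_le_ker U (hS U hU), ← Set.ncard_coe_finset, Finset.coe_filter_univ]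
      _ = T.card * q ^ (finrank F V - 1) := by rw [Finset.sum_const, smul_eq_mul]
  have hzero : T.card < q * (T.filter fun U => U ≤ LinearMap.ker (0 : Dual F V)).card := by
    rw [LinearMap.ker_zero, Finset.filter_true_of_mem fun U _ => le_top]
    have : 0 < T.card := Finset.card_pos.mpr (by simpa using hne)
    have : 1 < q := Fintype.one_lt_card
    nlinarith
  -- Summing `#T ≤ q · #{U ∈ T | U ≤ ker φ}` over all `φ` gives `q^n #T < q^n #T`.
  by_contra! hcon
  have hle : ∀ φ ∈ (Finset.univ : Finset (Dual F V)),
      T.card ≤ q * (T.filter fun U => U ≤ LinearMap.ker φ).card := by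
    intro φ _
    rcases eq_or_ne φ 0 with rfl | hφ
    · exact hzero.le
    · rw [← Set.ncard_coe_finset, ← Set.ncard_coe_finset, Finset.coe_filter]
      exact hcon _ (Module.Dual.finrank_ker_add_one_of_ne_zero hφ)
  have hpow : q * q ^ (finrank F V - 1) = q ^ finrank F V := by
    rw [← pow_succ', Nat.sub_add_cancel hV]
  have := Finset.sum_lt_sum hle ⟨0, Finset.mem_univ _, hzero⟩
  rw [← Finset.mul_sum, hdouble, Finset.sum_const, Finset.card_univ, card_eq_pow_finrank (K := F),
    Subspace.dual_finrank_eq, smul_eq_mul, mul_left_comm, hpow, mul_comm] at this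
  exact lt_irrefl _ this

end FiniteField

theorem stmt_5_general (q n t s l x : ℕ) (F : Type*) [Field F] [Fintype F]
    (hF : Fintype.card F = q) (hnt : t < n) (hts : s ≤ t) (hs : 2 ≤ s)
    (P : Set (Submodule F (Fin n → F)))
    (hP : ∀ v : Fin n → F, v ≠ 0 → ∃! U, U ∈ P ∧ v ∈ U)
    (hdim : ∀ U ∈ P, finrank F U = 1 ∨ (s ≤ finrank F U ∧ finrank F U ≤ t))
    (hcount : {U ∈ P | s ≤ finrank F U}.ncard = l * q ^ s + x) (hx : 1 ≤ x)
    (m1 : ℕ) (hm1 : m1 = {U ∈ P | finrank F U = 1}.ncard) (hm11 : 1 ≤ m1)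
    (b c : ℤ) (hbc : (m1 : ℤ) = b * (q : ℤ) ^ s + c)
    (hdiv : (q : ℤ) ∣ c + (x : ℤ) - 1) :
    ∃ H : Submodule F (Fin n → F), finrank F H = n - 1 ∧
      ∃ bhat : ℤ, bhat < b ∧
        ({U ∈ P | finrank F U = 1 ∧ U ≤ H}.ncard : ℤ)
          = bhat * (q : ℤ) ^ (s - 1) + (c + (x : ℤ) - 1) / (q : ℤ) := by
  subst hF
  replace hP : IsVectorSpacePartition P := hP
  have hV : finrank F (Fin n → F) = n := Module.finrank_fin_fun F
  obtain ⟨H, hH, hlt⟩ := exists_hyperplane_mul_ncard_lt {U ∈ P | finrank F U = 1}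
    (fun U hU => hU.2) (Set.nonempty_of_ncard_ne_zero (by omega))
  have hsep : {U ∈ {U ∈ P | finrank F U = 1} | U ≤ H} = {U ∈ P | finrank F U = 1 ∧ U ≤ H} :=
    Set.ext fun _ => and_assoc
  have hbig : {U ∈ P | finrank F U ≠ 1} = {U ∈ P | s ≤ finrank F U} :=
    Set.ext fun U => and_congr_right fun hU => by rcases hdim U hU with h | h <;> omega
  have hTop := hP.pow_dvd_sub_one_mul_ncard_holes_sub (W := ⊤) (r := s)
    (by rw [finrank_top, hV]; omega) fun U hU h1 => by
      rw [inf_top_eq]; have := hdim U hU; omega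
  have hHyp := hP.pow_dvd_sub_one_mul_ncard_holes_sub (W := H) (r := s - 1) (by omega)
    fun U hU h1 => by
      have := hdim U hU; have := Submodule.finrank_le_finrank_inf_add_one hH U; omega
  simp only [le_top, and_true, hbig, hcount, ← hm1] at hTop hHyp
  rw [hsep, ← hm1] at hlt
  push_cast at hTop hHyp
  obtain ⟨b', hb', hm⟩ := exists_lt_eq_mul_pow_pred_add_div (by omega)
    (Nat.cast_pos.mpr Fintype.card_pos) (by exact_mod_cast hx) hdiv hbc (by exact_mod_cast hlt)
    (pow_dvd_mul_sub_sub_of_dvd_sub_one_mul (by omega) hTop hHyp)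
  exact ⟨H, by omega, b', hb', hm⟩

/-- Key lemma: from a vector space partition of hole-type `(t,s,m₁)` with `l·q^s + x`
members of dimension `≥ s`, `x ≥ 1` and `m₁ = b·q^s + c ≥ 1`, one finds a hyperplane
with `b̂·q^{s−1} + (c+x−1)/q` holes for some integer `b̂ < b`. -/
theorem stmt_5 (q n t s l x : ℕ) (hq : 1 < q) (F : Type*) [Field F] [Fintype F]
    (hF : Fintype.card F = q) (hnt : t < n) (hts : s ≤ t) (hs : 2 ≤ s)
    (P : Set (Submodule F (Fin n → F)))
    (hP : ∀ v : Fin n → F, v ≠ 0 → ∃! U, U ∈ P ∧ v ∈ U)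
    (hP0 : ∀ U ∈ P, U ≠ ⊥)
    (hPnontriv : ∃ U ∈ P, 1 < finrank F U)
    (hdim : ∀ U ∈ P, finrank F U = 1 ∨ (s ≤ finrank F U ∧ finrank F U ≤ t))
    (hcount : {U ∈ P | s ≤ finrank F U}.ncard = l * q ^ s + x) (hx : 1 ≤ x)
    (m1 : ℕ) (hm1 : m1 = {U ∈ P | finrank F U = 1}.ncard) (hm11 : 1 ≤ m1)
    (b c : ℤ) (hbc : (m1 : ℤ) = b * (q : ℤ) ^ s + c)
    (hdiv : (q : ℤ) ∣ c + (x : ℤ) - 1) :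
    ∃ H : Submodule F (Fin n → F), finrank F H = n - 1 ∧
      ∃ bhat : ℤ, bhat < b ∧
        ({U ∈ P | finrank F U = 1 ∧ U ≤ H}.ncard : ℤ)
          = bhat * (q : ℤ) ^ (s - 1) + (c + (x : ℤ) - 1) / (q : ℤ) :=
  stmt_5_general q n t s l x F hF hnt hts hs P hP hdim hcount hx m1 hm1 hm11 b c hbc hdiv
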